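/- arXiv:2109.00245 — 2 statements merged into one kernel-verified Lean document; each statement's English description precedes it below -/
import Mathlib

section
/- Let c > 0 and ω ∈ (-π, π] with ω ≠ 0. The point −1 ∈ ℂ lies outside the closed disk of center c/(e^{iω}−1) and radius |c/(e^{iω}−1)| if and only if c < 1. -/
/-!
Put `z = e^{iω} - 1`, so `F = c / z` and `-1 ∉ B(F, |F|)` says `|c| < |z + c|`. Since `z` lies on
the unit circle around `-1`, `|z|² = -2 Re z`, hence `|z + c|² - c² = 2 (1 - c) (-Re z)`; and
`Re z = cos ω - 1 < 0` because `ω ∈ (-π, π] \ {0}`.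
-/

open Complex Metric Set

theorem neg_one_notMem_closedBall_div_iff {a z : ℂ} (hz : z ≠ 0) :
    (-1 : ℂ) ∉ closedBall (a / z) ‖a / z‖ ↔ ‖a‖ < ‖z + a‖ := by
  rw [mem_closedBall, dist_eq, not_le, show -1 - a / z = -((z + a) / z) by field_simp; ring,
    norm_neg, norm_div, norm_div, div_lt_div_iff_of_pos_right (norm_pos_iff.mpr hz)]

theorem norm_add_ofReal_sq_of_norm_add_one_eq_one {z : ℂ} (hz : ‖z + 1‖ = 1) (c : ℝ) :
    ‖z + c‖ ^ 2 = c ^ 2 - 2 * (1 - c) * z.re := by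
  have hz' : ‖z + 1‖ ^ 2 = 1 := by rw [hz, one_pow]
  rw [Complex.sq_norm, normSq_apply] at hz' ⊢
  simp only [add_re, add_im, one_re, one_im, ofReal_re, ofReal_im, add_zero] at hz' ⊢
  linear_combination hz'

theorem abs_lt_norm_add_ofReal_iff {z : ℂ} (hz : ‖z + 1‖ = 1) (hre : z.re < 0) (c : ℝ) :
    |c| < ‖z + c‖ ↔ c < 1 := by
  rw [← abs_norm, ← sq_lt_sq, norm_add_ofReal_sq_of_norm_add_one_eq_one hz]
  constructor <;> intro h <;> nlinarith

theorem Real.cos_lt_one_of_mem_Ioc {ω : ℝ} (hω : ω ∈ Ioc (-Real.pi) Real.pi) (hω0 : ω ≠ 0) :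
    Real.cos ω < 1 :=
  (Real.cos_le_one ω).lt_of_ne fun h =>
    hω0 ((Real.cos_eq_one_iff_of_lt_of_lt (by linarith [hω.1, Real.pi_pos])
      (by linarith [hω.2, Real.pi_pos])).mp h)

theorem stmt_7_general (c ω : ℝ) (hω : ω ∈ Set.Ioc (-Real.pi) Real.pi) (hω0 : ω ≠ 0) :
    (-1 : ℂ) ∉ Metric.closedBall ((c : ℂ) / (Complex.exp (ω * Complex.I) - 1))
      ‖(c : ℂ) / (Complex.exp (ω * Complex.I) - 1)‖ ↔ c < 1 := by
  set z := Complex.exp (ω * Complex.I) - 1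
  have hz : ‖z + 1‖ = 1 := by simp [z, norm_exp_ofReal_mul_I]
  have hre : z.re < 0 := by
    simpa [z, exp_ofReal_mul_I_re] using Real.cos_lt_one_of_mem_Ioc hω hω0
  rw [neg_one_notMem_closedBall_div_iff fun h => hre.ne (by rw [h, zero_re]), norm_real,
    Real.norm_eq_abs, abs_lt_norm_add_ofReal_iff hz hre]

/-- For `c > 0` and `ω ∈ (-π, π]`, `ω ≠ 0`, the point `-1 ∈ ℂ` lies outside the closed
disk with center `F = c / (e^{iω} - 1)` and radius `|F|` if and only if `c < 1`. -/
theorem stmt_7 (c ω : ℝ) (hc : 0 < c) (hω : ω ∈ Set.Ioc (-Real.pi) Real.pi) (hω0 : ω ≠ 0) :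
    (-1 : ℂ) ∉ Metric.closedBall ((c : ℂ) / (Complex.exp (ω * Complex.I) - 1))
      ‖(c : ℂ) / (Complex.exp (ω * Complex.I) - 1)‖ ↔ c < 1 :=
  stmt_7_general c ω hω hω0
end

section
/- Consider the delayed consensus dynamics x(k+1) = x(k) − K·D·x(k) + K·A·x(k−1) on an undirected connected graph with adjacency A, degree matrix D, and diagonal gain matrix K = diag(K_i) with 0 < d_i·K_i < 1 for all i (d_i the degree of node i). Then for every initial condition, x(k) converges as k → ∞ to a consensus vector c·1_n for some scalar c. -/
open Finset Filter

/-- Two-step induction helper. -/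
theorem aux_two_step {P : ℕ → Prop} (h0 : P 0) (h1 : P 1)
    (hs : ∀ s, P s → P (s + 1) → P (s + 2)) : ∀ s, P s := by
  have key : ∀ s, P s ∧ P (s + 1) := by
    intro s
    induction s with
    | zero => exact ⟨h0, h1⟩
    | succ t ih => exact ⟨ih.2, hs t ih.1 ih.2⟩
  exact fun s => (key s).1

/-- Delayed consensus dynamics `x (k+1) = x k - K D x k + K A x (k-1)` on an
undirected connected graph with adjacency `A`, degree matrix `D`, and diagonal gains
`K` with `0 < d_i K_i < 1`: every trajectory converges to a consensus vector `c • 1`. -/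
theorem stmt_19 {n : ℕ} (G : SimpleGraph (Fin n)) [DecidableRel G.Adj]
    (hG : G.Connected) (K : Fin n → ℝ)
    (hK : ∀ i, 0 < (G.degree i : ℝ) * K i ∧ (G.degree i : ℝ) * K i < 1)
    (x : ℕ → (Fin n → ℝ))
    (hx : ∀ k, x (k + 2) = x (k + 1)
      - (Matrix.diagonal K * Matrix.diagonal (fun i => (G.degree i : ℝ))).mulVec (x (k + 1))
      + (Matrix.diagonal K * G.adjMatrix ℝ).mulVec (x k)) :
    ∃ c : ℝ, Filter.Tendsto x Filter.atTop (nhds (fun _ => c)) := by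
  rcases Nat.eq_zero_or_pos n with hn | hn
  · refine ⟨0, ?_⟩
    have hx0 : x = fun _ => (fun _ => (0 : ℝ)) :=
      funext fun k => funext fun i => absurd i.isLt (by omega)
    rw [hx0]
    exact tendsto_const_nhds
  haveI : Nonempty (Fin n) := ⟨⟨0, hn⟩⟩
  set d : Fin n → ℝ := fun i => (G.degree i : ℝ) with hd
  -- componentwise recurrence
  have hrec : ∀ k i, x (k + 2) i = (1 - K i * d i) * x (k + 1) i
      + K i * ∑ j ∈ G.neighborFinset i, x k j := by
    intro k i
    have h := congrFun (hx k) i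
    rw [Matrix.diagonal_mul_diagonal, ← Matrix.mulVec_mulVec] at h
    simp only [Pi.add_apply, Pi.sub_apply, Matrix.mulVec_diagonal, Pi.mul_apply,
      SimpleGraph.adjMatrix_mulVec_apply] at h
    rw [h]; ring
  -- basic positivity facts
  have hK' : ∀ i, 0 < K i ∧ 0 < d i ∧ K i * d i < 1 := by
    intro i
    have h1 := (hK i).1
    have h2 := (hK i).2
    have hd0 : (0 : ℝ) ≤ d i := Nat.cast_nonneg _
    have hKpos : 0 < K i := by nlinarith
    have hdpos : 0 < d i := by nlinarith
    exact ⟨hKpos, hdpos, by nlinarith⟩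
  -- the contraction coefficient
  set δ : ℝ := Finset.univ.inf' Finset.univ_nonempty (fun i => min (1 - K i * d i) (K i)) with hδ
  have hδpos : 0 < δ := by
    rw [hδ, Finset.lt_inf'_iff]
    intro i _
    exact lt_min (by linarith [(hK' i).1, (hK' i).2.2]) (hK' i).1
  have hδα : ∀ i, δ ≤ 1 - K i * d i := fun i =>
    (Finset.inf'_le _ (mem_univ i)).trans (min_le_left _ _)
  have hδK : ∀ i, δ ≤ K i := fun i =>
    (Finset.inf'_le _ (mem_univ i)).trans (min_le_right _ _)
  have hδ1 : δ < 1 := by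
    obtain ⟨i⟩ := ‹Nonempty (Fin n)›
    have h1 := hδα i
    have h2 := (hK' i).1
    have h3 := (hK' i).2.1
    nlinarith
  -- window max and min
  set M : ℕ → ℝ := fun k =>
    Finset.univ.sup' Finset.univ_nonempty (fun i => max (x (k + 1) i) (x k i)) with hM
  set m : ℕ → ℝ := fun k =>
    Finset.univ.inf' Finset.univ_nonempty (fun i => min (x (k + 1) i) (x k i)) with hm
  have hxM : ∀ k i, x k i ≤ M k := fun k i =>
    (le_max_right _ _).trans
      (Finset.le_sup' (fun i => max (x (k + 1) i) (x k i)) (mem_univ i))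
  have hxM1 : ∀ k i, x (k + 1) i ≤ M k := fun k i =>
    (le_max_left _ _).trans
      (Finset.le_sup' (fun i => max (x (k + 1) i) (x k i)) (mem_univ i))
  have hmx : ∀ k i, m k ≤ x k i := fun k i =>
    (Finset.inf'_le (fun i => min (x (k + 1) i) (x k i)) (mem_univ i)).trans
      (min_le_right _ _)
  have hmx1 : ∀ k i, m k ≤ x (k + 1) i := fun k i =>
    (Finset.inf'_le (fun i => min (x (k + 1) i) (x k i)) (mem_univ i)).trans
      (min_le_left _ _)
  have hmM : ∀ k, m k ≤ M k := fun k => (hmx k (Classical.arbitrary _)).trans (hxM k _)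
  -- the global upper bound
  have hub : ∀ k s, k ≤ s → ∀ i, x s i ≤ M k := by
    intro k s hks
    obtain ⟨t, rfl⟩ := Nat.exists_eq_add_of_le hks
    induction t using aux_two_step with
    | h0 => exact hxM k
    | h1 => exact hxM1 k
    | hs t ih ih1 =>
      intro i
      have hsum : ∑ j ∈ G.neighborFinset i, x (k + t) j ≤ d i * M k := by
        calc ∑ j ∈ G.neighborFinset i, x (k + t) j
            ≤ ∑ _j ∈ G.neighborFinset i, M k := Finset.sum_le_sum fun j _ => ih (by omega) j
          _ = d i * M k := by
              rw [Finset.sum_const, nsmul_eq_mul, SimpleGraph.card_neighborFinset_eq_degree]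
      have h1 : x (k + t + 1) i ≤ M k := ih1 (by omega) i
      have hα := hδα i
      have hKpos := (hK' i).1
      rw [show k + (t + 2) = (k + t) + 2 from rfl, hrec (k + t) i]
      nlinarith [mul_le_mul_of_nonneg_left hsum hKpos.le,
        mul_le_mul_of_nonneg_left h1 (by linarith [(hK' i).2.2] : (0:ℝ) ≤ 1 - K i * d i)]
  -- the global lower bound
  have hlb : ∀ k s, k ≤ s → ∀ i, m k ≤ x s i := by
    intro k s hks
    obtain ⟨t, rfl⟩ := Nat.exists_eq_add_of_le hks
    induction t using aux_two_step with
    | h0 => exact hmx k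
    | h1 => exact hmx1 k
    | hs t ih ih1 =>
      intro i
      have hsum : d i * m k ≤ ∑ j ∈ G.neighborFinset i, x (k + t) j := by
        calc d i * m k
            = ∑ _j ∈ G.neighborFinset i, m k := by
              rw [Finset.sum_const, nsmul_eq_mul, SimpleGraph.card_neighborFinset_eq_degree]
          _ ≤ ∑ j ∈ G.neighborFinset i, x (k + t) j :=
              Finset.sum_le_sum fun j _ => ih (by omega) j
      have h1 : m k ≤ x (k + t + 1) i := ih1 (by omega) i
      have hKpos := (hK' i).1
      rw [show k + (t + 2) = (k + t) + 2 from rfl, hrec (k + t) i]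
      nlinarith [mul_le_mul_of_nonneg_left hsum hKpos.le,
        mul_le_mul_of_nonneg_left h1 (by linarith [(hK' i).2.2] : (0:ℝ) ≤ 1 - K i * d i)]
  -- monotonicity of M and m
  have hManti : Antitone M := antitone_nat_of_succ_le fun k => by
    refine Finset.sup'_le _ _ fun i _ => max_le ?_ ?_
    · exact hub k (k + 1 + 1) (by omega) i
    · exact hub k (k + 1) (by omega) i
  have hmmono : Monotone m := monotone_nat_of_le_succ fun k => by
    refine Finset.le_inf' _ _ fun i _ => le_min ?_ ?_
    · exact hlb k (k + 1 + 1) (by omega) i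
    · exact hlb k (k + 1) (by omega) i
  -- persistence of an improved bound at a node
  have persist : ∀ k s i η, k + 1 ≤ s → 0 ≤ η → x s i ≤ M k - η →
      x (s + 1) i ≤ M k - δ * η := by
    intro k s i η hks hη hsi
    obtain ⟨s', rfl⟩ : ∃ s', s = s' + 1 := ⟨s - 1, by omega⟩
    have hsum : ∑ j ∈ G.neighborFinset i, x s' j ≤ d i * M k := by
      calc ∑ j ∈ G.neighborFinset i, x s' j
          ≤ ∑ _j ∈ G.neighborFinset i, M k :=
            Finset.sum_le_sum fun j _ => hub k s' (by omega) j
        _ = d i * M k := by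
            rw [Finset.sum_const, nsmul_eq_mul, SimpleGraph.card_neighborFinset_eq_degree]
    have hKpos := (hK' i).1
    have hα := hδα i
    rw [show s' + 1 + 1 = s' + 2 from rfl, hrec s' i]
    nlinarith [mul_le_mul_of_nonneg_left hsum hKpos.le,
      mul_le_mul_of_nonneg_left hsi (by linarith [(hK' i).2.2] : (0:ℝ) ≤ 1 - K i * d i),
      mul_le_mul_of_nonneg_right hα hη]
  -- an improved bound spreads to neighbors in two steps
  have spread : ∀ k s i j η, k ≤ s → 0 ≤ η → G.Adj i j → x s j ≤ M k - η →
      x (s + 2) i ≤ M k - δ * η := by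
    intro k s i j η hks hη hadj hsj
    have hjmem : j ∈ G.neighborFinset i := (SimpleGraph.mem_neighborFinset G i j).2 hadj
    have hd1 : 1 ≤ G.degree i := by
      rw [← SimpleGraph.card_neighborFinset_eq_degree]
      exact Finset.card_pos.2 ⟨j, hjmem⟩
    have hsum : ∑ j' ∈ G.neighborFinset i, x s j' ≤ d i * M k - η := by
      have hsplit : x s j + ∑ j' ∈ (G.neighborFinset i).erase j, x s j' =
          ∑ j' ∈ G.neighborFinset i, x s j' := Finset.add_sum_erase _ _ hjmem
      have h2 : ∑ j' ∈ (G.neighborFinset i).erase j, x s j' ≤ (d i - 1) * M k := by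
        calc ∑ j' ∈ (G.neighborFinset i).erase j, x s j'
            ≤ ∑ _j' ∈ (G.neighborFinset i).erase j, M k :=
              Finset.sum_le_sum fun j' _ => hub k s hks j'
          _ = (d i - 1) * M k := by
              rw [Finset.sum_const, nsmul_eq_mul, Finset.card_erase_of_mem hjmem,
                SimpleGraph.card_neighborFinset_eq_degree, Nat.cast_sub hd1, Nat.cast_one]
      have hMub : m k ≤ M k := hmM k
      nlinarith [hlb k s hks j]
    have hKpos := (hK' i).1
    have hδKi := hδK i
    have hx1 : x (s + 1) i ≤ M k := hub k (s + 1) (by omega) i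
    rw [hrec s i]
    nlinarith [mul_le_mul_of_nonneg_left hsum hKpos.le,
      mul_le_mul_of_nonneg_left hx1 (by linarith [(hK' i).2.2] : (0:ℝ) ≤ 1 - K i * d i),
      mul_le_mul_of_nonneg_right hδKi hη]
  -- seed: a node with improved bound at time k+3
  have seed : ∀ k, ∃ i1, x (k + 3) i1 ≤ M k - δ ^ 2 * (M k - m k) := by
    intro k
    set ε : ℝ := M k - m k with hε
    have hε0 : 0 ≤ ε := by have := hmM k; linarith
    obtain ⟨i0, -, hi0⟩ := Finset.exists_mem_eq_inf' (Finset.univ_nonempty (α := Fin n))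
      (fun i => min (x (k + 1) i) (x k i))
    have hm0 : m k = min (x (k + 1) i0) (x k i0) := hi0
    rcases le_total (x (k + 1) i0) (x k i0) with hc | hc
    · -- minimum attained at time k+1
      have h1 : x (k + 1) i0 ≤ M k - ε := by
        rw [min_eq_left hc] at hm0
        rw [hε]; linarith
      have h2 : x (k + 1 + 1) i0 ≤ M k - δ * ε := persist k (k + 1) i0 ε le_rfl hε0 h1
      have h3 : x (k + 2 + 1) i0 ≤ M k - δ * (δ * ε) :=
        persist k (k + 2) i0 (δ * ε) (by omega) (by positivity) h2
      exact ⟨i0, by rw [show k + 3 = k + 2 + 1 from rfl]; nlinarith⟩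
    · -- minimum attained at time k
      have h1 : x k i0 ≤ M k - ε := by
        rw [min_eq_right hc] at hm0
        rw [hε]; linarith
      have hdeg : 0 < G.degree i0 := by
        have := (hK' i0).2.1
        simp only [hd] at this
        exact_mod_cast this
      obtain ⟨j0, hj0⟩ := Finset.card_pos.1
        (by rwa [SimpleGraph.card_neighborFinset_eq_degree] : 0 < (G.neighborFinset i0).card)
      have hadj : G.Adj j0 i0 := ((SimpleGraph.mem_neighborFinset G i0 j0).1 hj0).symm
      have h2 : x (k + 2) j0 ≤ M k - δ * ε := spread k k j0 i0 ε le_rfl hε0 hadj h1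
      have h3 : x (k + 2 + 1) j0 ≤ M k - δ * (δ * ε) :=
        persist k (k + 2) j0 (δ * ε) (by omega) (by positivity) h2
      exact ⟨j0, by rw [show k + 3 = k + 2 + 1 from rfl]; nlinarith⟩
  -- gap contraction
  have gap_contract : ∀ k, M (k + 3 + 2 * n) - m (k + 3 + 2 * n) ≤
      (1 - δ ^ (2 * n + 4)) * (M k - m k) := by
    intro k
    set ε : ℝ := M k - m k with hε
    have hε0 : 0 ≤ ε := by have := hmM k; linarith
    obtain ⟨i1, hi1'⟩ := seed k
    have hi1 : x (k + 3) i1 ≤ M k - δ ^ 2 * ε := by rw [hε]; exact hi1'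
    -- the propagation claim
    have claim : ∀ r, ∀ i, ∀ p : G.Walk i i1, 2 * p.length ≤ r →
        x (k + 3 + r) i ≤ M k - δ ^ (3 + r) * ε := by
      refine aux_two_step ?_ ?_ ?_
      · intro i p hp
        have hl : p.length = 0 := by omega
        have hii : i = i1 := SimpleGraph.Walk.eq_of_length_eq_zero hl
        have hpow : δ ^ (3 + 0) * ε ≤ δ ^ 2 * ε :=
          mul_le_mul_of_nonneg_right
            (pow_le_pow_of_le_one hδpos.le hδ1.le (by norm_num)) hε0
        rw [show k + 3 + 0 = k + 3 from rfl, hii]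
        linarith
      · intro i p hp
        have hl : p.length = 0 := by omega
        have hii : i = i1 := SimpleGraph.Walk.eq_of_length_eq_zero hl
        have h1 : x (k + 3 + 1) i1 ≤ M k - δ * (δ ^ 2 * ε) :=
          persist k (k + 3) i1 (δ ^ 2 * ε) (by omega) (by positivity) hi1
        have hpow : δ ^ (3 + 1) * ε ≤ δ * (δ ^ 2 * ε) := by
          have e1 : δ * (δ ^ 2 * ε) = δ ^ 3 * ε := by ring
          have e2 : δ ^ (3 + 1) ≤ δ ^ 3 := pow_le_pow_of_le_one hδpos.le hδ1.le (by norm_num)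
          rw [e1]
          exact mul_le_mul_of_nonneg_right e2 hε0
        rw [show k + 3 + 1 = k + 3 + 1 from rfl, hii]
        linarith
      · intro r ihr ihr1 i p hp
        by_cases hcase : 2 * p.length ≤ r + 1
        · have h1 := ihr1 i p hcase
          have h2 : x (k + 3 + (r + 1) + 1) i ≤ M k - δ * (δ ^ (3 + (r + 1)) * ε) :=
            persist k (k + 3 + (r + 1)) i (δ ^ (3 + (r + 1)) * ε) (by omega)
              (by positivity) h1
          have heq : δ * (δ ^ (3 + (r + 1)) * ε) = δ ^ (3 + (r + 2)) * ε := by ring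
          rw [show k + 3 + (r + 2) = k + 3 + (r + 1) + 1 from rfl]
          linarith [h2, heq.ge]
        · have hlen : 2 * p.length = r + 2 := by omega
          cases p with
          | nil => simp at hlen
          | cons hadj q =>
            rename_i j
            have hq : 2 * q.length ≤ r := by
              simp only [SimpleGraph.Walk.length_cons] at hlen
              omega
            have h1 := ihr j q hq
            have h2 : x (k + 3 + r + 2) i ≤ M k - δ * (δ ^ (3 + r) * ε) :=
              spread k (k + 3 + r) i j (δ ^ (3 + r) * ε) (by omega)
                (by positivity) hadj h1
            have hpow : δ ^ (3 + (r + 2)) * ε ≤ δ * (δ ^ (3 + r) * ε) := by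
              have e1 : δ * (δ ^ (3 + r) * ε) = δ ^ (4 + r) * ε := by ring
              have e2 : δ ^ (3 + (r + 2)) ≤ δ ^ (4 + r) :=
                pow_le_pow_of_le_one hδpos.le hδ1.le (by omega)
              rw [e1]
              exact mul_le_mul_of_nonneg_right e2 hε0
            rw [show k + 3 + (r + 2) = k + 3 + r + 2 from rfl]
            linarith
    -- every node is within distance < n of i1
    have hall : ∀ i r, 2 * (n - 1) ≤ r → x (k + 3 + r) i ≤ M k - δ ^ (3 + r) * ε := by
      intro i r hr
      have hreach : G.Reachable i i1 := hG.preconnected i i1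
      obtain ⟨w⟩ := hreach
      have hpath : (w.toPath : G.Walk i i1).IsPath := w.toPath.2
      have hlt : (w.toPath : G.Walk i i1).length < n := by
        have := hpath.length_lt
        rwa [Fintype.card_fin] at this
      exact claim r i w.toPath (by omega)
    have hub2 : M (k + 3 + 2 * n) ≤ M k - δ ^ (2 * n + 4) * ε := by
      refine Finset.sup'_le _ _ fun i _ => max_le ?_ ?_
      · have h := hall i (2 * n + 1) (by omega)
        have hpow : δ ^ (2 * n + 4) * ε ≤ δ ^ (3 + (2 * n + 1)) * ε :=
          mul_le_mul_of_nonneg_right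
            (pow_le_pow_of_le_one hδpos.le hδ1.le (by omega)) hε0
        rw [show k + 3 + 2 * n + 1 = k + 3 + (2 * n + 1) from rfl]
        linarith
      · have h := hall i (2 * n) (by omega)
        have hpow : δ ^ (2 * n + 4) * ε ≤ δ ^ (3 + 2 * n) * ε :=
          mul_le_mul_of_nonneg_right
            (pow_le_pow_of_le_one hδpos.le hδ1.le (by omega)) hε0
        linarith
    have hmge : m k ≤ m (k + 3 + 2 * n) := hmmono (by omega)
    have : (1 - δ ^ (2 * n + 4)) * ε = ε - δ ^ (2 * n + 4) * ε := by ring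
    simp only [hε] at *
    linarith
  -- assembling the limit
  set gap : ℕ → ℝ := fun k => M k - m k with hgap
  have hgap0 : ∀ k, 0 ≤ gap k := fun k => by have := hmM k; simp only [hgap]; linarith
  have hganti : Antitone gap := fun a b hab => by
    simp only [hgap]
    have := hManti hab
    have := hmmono hab
    linarith
  set θ : ℝ := 1 - δ ^ (2 * n + 4) with hθ
  have hθ0 : 0 ≤ θ := by
    have : δ ^ (2 * n + 4) ≤ 1 := pow_le_one₀ hδpos.le hδ1.le
    simp only [hθ]; linarith
  have hθ1 : θ < 1 := by
    have : 0 < δ ^ (2 * n + 4) := pow_pos hδpos _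
    simp only [hθ]; linarith
  have iter : ∀ s, gap ((2 * n + 3) * s) ≤ θ ^ s * gap 0 := by
    intro s
    induction s with
    | zero => simp
    | succ t ih =>
      have e : (2 * n + 3) * (t + 1) = (2 * n + 3) * t + 3 + 2 * n := by ring
      have h1 : gap ((2 * n + 3) * t + 3 + 2 * n) ≤ θ * gap ((2 * n + 3) * t) :=
        gap_contract ((2 * n + 3) * t)
      rw [e]
      calc gap ((2 * n + 3) * t + 3 + 2 * n) ≤ θ * gap ((2 * n + 3) * t) := h1
        _ ≤ θ * (θ ^ t * gap 0) := mul_le_mul_of_nonneg_left ih hθ0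
        _ = θ ^ (t + 1) * gap 0 := by ring
  -- gap tends to 0
  have hbdd : BddBelow (Set.range gap) := ⟨0, by rintro _ ⟨k, rfl⟩; exact hgap0 k⟩
  have hgconv : Tendsto gap atTop (nhds (⨅ k, gap k)) := tendsto_atTop_ciInf hganti hbdd
  have hinf0 : (⨅ k, gap k) = 0 := by
    have hle : ∀ s : ℕ, (⨅ k, gap k) ≤ θ ^ s * gap 0 := fun s =>
      (ciInf_le hbdd ((2 * n + 3) * s)).trans (iter s)
    have hpow : Tendsto (fun s : ℕ => θ ^ s * gap 0) atTop (nhds (0 * gap 0)) :=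
      (tendsto_pow_atTop_nhds_zero_of_lt_one hθ0 hθ1).mul_const _
    rw [zero_mul] at hpow
    have h1 : (⨅ k, gap k) ≤ 0 := ge_of_tendsto' hpow hle
    have h2 : (0 : ℝ) ≤ ⨅ k, gap k := le_ciInf hgap0
    linarith
  rw [hinf0] at hgconv
  -- m converges
  have hmbdd : BddAbove (Set.range m) := ⟨M 0, by
    rintro _ ⟨k, rfl⟩
    exact (hmM k).trans (hManti (Nat.zero_le k))⟩
  have hmconv : Tendsto m atTop (nhds (⨆ k, m k)) := tendsto_atTop_ciSup hmmono hmbdd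
  set c : ℝ := ⨆ k, m k with hc
  have hMconv : Tendsto M atTop (nhds c) := by
    have : M = fun k => m k + gap k := funext fun k => by simp only [hgap]; ring
    rw [this, show c = c + 0 by ring]
    exact hmconv.add hgconv
  refine ⟨c, ?_⟩
  rw [tendsto_pi_nhds]
  intro i
  exact tendsto_of_tendsto_of_tendsto_of_le_of_le hmconv hMconv
    (fun k => hmx k i) (fun k => hxM k i)
end
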